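/- Let B be a left semi-brace. Then E is an ideal of B if and only if there exists a map φ : B → B such that φ is an endomorphism of the group (B,∘) (i.e. φ(a∘b) = φ(a)∘φ(b) for all a,b ∈ B), φ∘φ = φ, the image of φ equals G, and {b ∈ B : φ(b) = 0} = E. Furthermore, in this case φ = ρ_0, i.e. φ(b) = (b⁻+0)⁻∘0 for all b ∈ B. -/
import Mathlib


/-- A left semi-brace: `(B,+)` is a left cancellative semigroup, `(B,*)` is a group
(whose identity `1` plays the role of `0` in the additive notation of the paper, and
`a⁻¹` plays the role of `a⁻`), and `a ∘ (b + c) = a ∘ b + a ∘ (a⁻ + c)` holds. -/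
class LeftSemiBrace (B : Type*) extends Group B, Add B where
  add_assoc : ∀ a b c : B, a + b + c = a + (b + c)
  add_left_cancel : ∀ a b c : B, a + b = a + c → b = c
  circ_add : ∀ a b c : B, a * (b + c) = a * b + a * (a⁻¹ + c)

namespace LeftSemiBrace

variable {B : Type*} [LeftSemiBrace B]

/-- The set `E` of additive idempotents. -/
def E (B : Type*) [LeftSemiBrace B] : Set B := {e | e + e = e}

/-- The set `G = B + 0`. -/
def G (B : Type*) [LeftSemiBrace B] : Set B := {x | ∃ b : B, x = b + 1}

/-- `λ_a (b) = a ∘ (a⁻ + b)`. -/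
def lam (a b : B) : B := a * (a⁻¹ + b)

/-- `ρ_b (a) = (a⁻ + b)⁻ ∘ b`. -/
def rho (b a : B) : B := (a⁻¹ + b)⁻¹ * b

/-- `a · b = λ_a(a⁻) + a ∘ b + λ_b(b⁻)`. -/
def dot (a b : B) : B := lam a a⁻¹ + a * b + lam b b⁻¹

/-- The group part `g_b = b + 0` of an element `b`. -/
def gp (b : B) : B := b + 1

/-- The additive inverse (within the group `(G,+)`) of the group part of an element:
for `g ∈ G` one has `neg g = -g`, since `-g_a = λ_a(a⁻) = a ∘ (a⁻ + a⁻)`. -/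
def neg (a : B) : B := a * (a⁻¹ + a⁻¹)

/-- The idempotent part `e_b = -g_b + b` of an element `b`. -/
def ep (b : B) : B := neg (gp b) + b

/-- `S` is a subsemigroup of `(B,+)`. -/
def IsAddSubsemigroup (S : Set B) : Prop := ∀ x ∈ S, ∀ y ∈ S, x + y ∈ S

/-- `S` is a subgroup of the multiplicative group `(B,∘)`. -/
def IsCircSubgroup (S : Set B) : Prop :=
  (1 : B) ∈ S ∧ (∀ x ∈ S, ∀ y ∈ S, x * y ∈ S) ∧ ∀ x ∈ S, x⁻¹ ∈ S

/-- `S` is a normal subgroup of the multiplicative group `(B,∘)`. -/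
def IsCircNormal (S : Set B) : Prop :=
  IsCircSubgroup S ∧ ∀ x ∈ S, ∀ b : B, b * x * b⁻¹ ∈ S

/-- `S` is a subgroup of the group `(G,+)`. -/
def IsAddSubgroupOfG (S : Set B) : Prop :=
  S ⊆ G B ∧ (1 : B) ∈ S ∧ (∀ x ∈ S, ∀ y ∈ S, x + y ∈ S) ∧ ∀ x ∈ S, neg x ∈ S

/-- `S` is a normal subgroup of the group `(G,+)`. -/
def IsAddNormalSubgroupOfG (S : Set B) : Prop :=
  IsAddSubgroupOfG S ∧ ∀ g ∈ G B, ∀ x ∈ S, g + x + neg g ∈ S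

/-- `I` is an ideal of the left semi-brace `B` (Definition 17 of Catino–Colazzo–Stefanelli):
`I` is a subsemigroup of `(B,+)`, a normal subgroup of `(B,∘)`, `I ∩ G` is a normal
subgroup of `(G,+)`, `ρ_b(n) ∈ I` for all `b ∈ B`, `n ∈ I ∩ G`, and `λ_g(e) ∈ I` for all
`g ∈ G`, `e ∈ I ∩ E`. -/
def IsIdeal (I : Set B) : Prop :=
  IsAddSubsemigroup I ∧ IsCircNormal I ∧ IsAddNormalSubgroupOfG (I ∩ G B) ∧
    (∀ b : B, ∀ n ∈ I ∩ G B, rho b n ∈ I) ∧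
    (∀ g ∈ G B, ∀ e ∈ I ∩ E B, lam g e ∈ I)

/-- `I` is a left ideal of the left semi-brace `B`. -/
def IsLeftIdeal (I : Set B) : Prop :=
  (∀ x ∈ I, x + 1 ∈ I) ∧ IsAddSubgroupOfG (I ∩ G B) ∧
    (∀ g ∈ G B, ∀ x ∈ I, lam g x ∈ I) ∧ IsCircSubgroup I

/-- The subgroup of `(G,+)` generated by a subset `S` of `G`. -/
def addClosure (S : Set B) : Set B :=
  ⋂₀ {T : Set B | S ⊆ T ∧ (1 : B) ∈ T ∧ (∀ x ∈ T, ∀ y ∈ T, x + y ∈ T) ∧ ∀ x ∈ T, neg x ∈ T}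

/-- `X · Y`: the subgroup of `(G,+)` generated by `{x · y : x ∈ X, y ∈ Y}`. -/
def dotSet (X Y : Set B) : Set B := addClosure {z | ∃ x ∈ X, ∃ y ∈ Y, z = dot x y}

/-- `S + E = {s + e : s ∈ S, e ∈ E}`. -/
def addE (S : Set B) : Set B := {z | ∃ s ∈ S, ∃ e ∈ E B, z = s + e}

/-- The right series of `B`: `rightSeries B n = B^(n+1)`, where `B^(1) = B` and
`B^(n+1) = B^(n) · B + E`. -/
def rightSeries (B : Type*) [LeftSemiBrace B] : ℕ → Set B
  | 0 => Set.univ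
  | n + 1 => addE (dotSet (rightSeries B n) Set.univ)

/-- The left series of `B`: `leftSeries B n = B^(n+1)`, where `B^1 = B` and
`B^(n+1) = B · B^n + E`. -/
def leftSeries (B : Type*) [LeftSemiBrace B] : ℕ → Set B
  | 0 => Set.univ
  | n + 1 => addE (dotSet Set.univ (leftSeries B n))

/-- The right series of the skew left brace `G`: `rightSeriesG B n = G^(n+1)`, where
`G^(1) = G` and `G^(n+1) = G^(n) · G`. -/
def rightSeriesG (B : Type*) [LeftSemiBrace B] : ℕ → Set B
  | 0 => G B
  | n + 1 => dotSet (rightSeriesG B n) (G B)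

/-- The series `bracketSeries B n = B^[n+1]`, where `B^[1] = B` and `B^[n+1] = H_n + E`
with `H_n` the subgroup of `(G,+)` generated by `⋃_{i=1}^{n} B^[i] · B^[n+1-i]`. -/
def bracketSeries (B : Type*) [LeftSemiBrace B] : ℕ → Set B
  | 0 => Set.univ
  | n + 1 =>
      addE (addClosure (⋃ i : Fin (n + 1),
        dotSet (bracketSeries B i.1) (bracketSeries B (n - i.1))))
  decreasing_by
  · exact i.isLt
  · exact Nat.lt_succ_of_le (Nat.sub_le n i.1)

/-- The socle `Soc(B) = {a ∈ B : ρ_a = ρ_0, λ_a = λ_0}`. -/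
def Soc (B : Type*) [LeftSemiBrace B] : Set B :=
  {a | rho a = rho (1 : B) ∧ lam a = lam (1 : B)}

/-- The generalized socle `Zoc(B) = Soc(B) + E`. -/
def Zoc (B : Type*) [LeftSemiBrace B] : Set B :=
  {z | ∃ a ∈ Soc B, ∃ e ∈ E B, z = a + e}

/-- The lower central series of the group `(G,+)`:  `γ_1 = G` and `γ_{n+1}` is the
subgroup of `(G,+)` generated by the additive commutators `-x - y + x + y` with
`x ∈ γ_n`, `y ∈ G`. -/
def lowerCentralSeriesG (B : Type*) [LeftSemiBrace B] : ℕ → Set B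
  | 0 => G B
  | n + 1 => addClosure
      {z | ∃ x ∈ lowerCentralSeriesG B n, ∃ y ∈ G B, z = neg x + neg y + x + y}

/-- The group `(G,+)` is nilpotent. -/
def IsNilpotentGAdd (B : Type*) [LeftSemiBrace B] : Prop :=
  ∃ n : ℕ, lowerCentralSeriesG B n = {(1 : B)}

section Aux

lemma aassoc (a b c : B) : a + b + c = a + (b + c) := LeftSemiBrace.add_assoc a b c

lemma acancel {a b c : B} (h : a + b = a + c) : b = c :=
  LeftSemiBrace.add_left_cancel a b c h

lemma one_add (a : B) : (1 : B) + a = a := by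
  have h := circ_add (1 : B) 1 a
  simp only [one_mul, inv_one] at h
  exact (acancel h).symm

lemma add_negSelf (a : B) : a + a * (a⁻¹ + a⁻¹) = 1 := by
  have h := circ_add a 1 a⁻¹
  rw [one_add, mul_inv_cancel, mul_one] at h
  exact h.symm

lemma mem_E_iff (x : B) : x ∈ E B ↔ x + 1 = 1 := by
  constructor
  · intro h
    have h' : x + x = x := h
    calc x + 1 = x + (x + x * (x⁻¹ + x⁻¹)) := by rw [add_negSelf]
      _ = (x + x) + x * (x⁻¹ + x⁻¹) := (aassoc ..).symm
      _ = x + x * (x⁻¹ + x⁻¹) := by rw [h']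
      _ = 1 := add_negSelf x
  · intro h
    show x + x = x
    calc x + x = x + (1 + x) := by rw [one_add]
      _ = (x + 1) + x := (aassoc ..).symm
      _ = 1 + x := by rw [h]
      _ = x := one_add x

lemma lam_add (a x y : B) : lam a x + lam a y = lam a (x + y) := by
  have h := circ_add a (a⁻¹ + x) y
  rw [aassoc] at h
  exact h.symm

lemma lam_one_mem_E (a : B) : lam a 1 ∈ E B := by
  show lam a 1 + lam a 1 = lam a 1
  rw [lam_add, one_add]

lemma lam_mem_E (a : B) {e : B} (he : e ∈ E B) : lam a e ∈ E B := by
  have h : e + e = e := he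
  show lam a e + lam a e = lam a e
  rw [lam_add, h]

lemma one_mem_G : (1 : B) ∈ G B := ⟨1, (one_add 1).symm⟩

lemma G_add_one {g : B} (hg : g ∈ G B) : g + 1 = g := by
  obtain ⟨b, rfl⟩ := hg
  rw [aassoc, one_add]

lemma lam_lam (a b c : B) : lam a (lam b c) = lam (a * b) c := by
  show a * (a⁻¹ + b * (b⁻¹ + c)) = (a * b) * ((a * b)⁻¹ + c)
  have h := circ_add b (b⁻¹ * a⁻¹) c
  rw [mul_inv_cancel_left] at h
  rw [mul_inv_rev, mul_assoc, h]

lemma lam_inv_one_of_G {g : B} (hg : g ∈ G B) : lam g⁻¹ 1 = 1 := by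
  show g⁻¹ * (g⁻¹⁻¹ + 1) = 1
  rw [inv_inv, G_add_one hg, inv_mul_cancel]

lemma lam_one_of_G {g : B} (hg : g ∈ G B) : lam g 1 = 1 := by
  have h := lam_inv_one_of_G hg
  calc lam g 1 = lam g (lam g⁻¹ 1) := by rw [h]
    _ = lam (g * g⁻¹) 1 := lam_lam g g⁻¹ 1
    _ = lam 1 1 := by rw [mul_inv_cancel]
    _ = 1 := by
        show (1 : B) * (1⁻¹ + 1) = 1
        rw [inv_one, one_add, mul_one]

lemma G_mul {g h : B} (hg : g ∈ G B) (hh : h ∈ G B) : g * h ∈ G B := by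
  refine ⟨g * h, ?_⟩
  have hc := circ_add g h 1
  rw [G_add_one hh] at hc
  have h1 : g * (g⁻¹ + 1) = 1 := lam_one_of_G hg
  rw [h1] at hc
  exact hc

lemma eq_one_of_mem_E_G {x : B} (hE : x ∈ E B) (hG : x ∈ G B) : x = 1 := by
  rw [← G_add_one hG]
  exact (mem_E_iff x).1 hE

lemma G_inv {g : B} (hg : g ∈ G B) : g⁻¹ ∈ G B := by
  have h1 : g * (g⁻¹ + 1) = 1 := lam_one_of_G hg
  exact ⟨g⁻¹, inv_eq_of_mul_eq_one_right h1⟩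

lemma pi_mem_G (a : B) : (a⁻¹ + 1)⁻¹ ∈ G B := G_inv ⟨a⁻¹, rfl⟩

lemma pi_of_G {g : B} (hg : g ∈ G B) : (g⁻¹ + 1)⁻¹ = g := by
  rw [G_add_one (G_inv hg), inv_inv]

lemma factorization (a : B) : a = lam a 1 * (a⁻¹ + 1)⁻¹ := by
  show a = a * (a⁻¹ + 1) * (a⁻¹ + 1)⁻¹
  rw [mul_inv_cancel_right]

lemma pi_eg {e g : B} (he : e⁻¹ ∈ E B) (hg : g ∈ G B) : ((e * g)⁻¹ + 1)⁻¹ = g := by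
  have h1 : e⁻¹ + 1 = 1 := (mem_E_iff _).1 he
  have hc := circ_add g⁻¹ e⁻¹ 1
  rw [h1, mul_one, inv_inv, G_add_one hg, inv_mul_cancel] at hc
  rw [mul_inv_rev, ← hc, inv_inv]

lemma rho_one_apply (a : B) : rho (1 : B) a = (a⁻¹ + 1)⁻¹ := by
  show (a⁻¹ + 1)⁻¹ * 1 = (a⁻¹ + 1)⁻¹
  rw [mul_one]

end Aux

/-- `E` is an ideal of `B` iff there is an idempotent endomorphism
`φ` of `(B,∘)` with image `G` and kernel `E`; furthermore any such `φ` equals `ρ_0`. -/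
theorem E_isIdeal_iff_proj (B : Type*) [LeftSemiBrace B] :
    (IsIdeal (E B) ↔
        ∃ φ : B → B,
          (∀ a b : B, φ (a * b) = φ a * φ b) ∧
            φ ∘ φ = φ ∧ Set.range φ = G B ∧ {b : B | φ b = 1} = E B) ∧
      ∀ φ : B → B,
        (∀ a b : B, φ (a * b) = φ a * φ b) →
          φ ∘ φ = φ → Set.range φ = G B → {b : B | φ b = 1} = E B →
            φ = rho (1 : B) := by
  constructor
  · constructor
    · -- forward: E ideal ⟹ existence of φ (take φ = ρ_1)
      intro hI
      obtain ⟨-, hN, -, -, -⟩ := hI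
      obtain ⟨⟨h1E, hmulE, hinvE⟩, hconj⟩ := hN
      refine ⟨rho (1 : B), ?_, ?_, ?_, ?_⟩
      · -- homomorphism
        intro a b
        rw [rho_one_apply, rho_one_apply, rho_one_apply]
        set ga := (a⁻¹ + 1)⁻¹ with hga
        set gb := (b⁻¹ + 1)⁻¹ with hgb
        have hfac : a * b = (lam a 1 * (ga * lam b 1 * ga⁻¹)) * (ga * gb) := by
          conv_lhs => rw [factorization a, factorization b]
          rw [← hga, ← hgb]
          group
        have hEmem : (lam a 1 * (ga * lam b 1 * ga⁻¹))⁻¹ ∈ E B :=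
          hinvE _ (hmulE _ (lam_one_mem_E a) _ (hconj _ (lam_one_mem_E b) ga))
        have hGmem : ga * gb ∈ G B := G_mul (pi_mem_G a) (pi_mem_G b)
        calc ((a * b)⁻¹ + 1)⁻¹
            = (((lam a 1 * (ga * lam b 1 * ga⁻¹)) * (ga * gb))⁻¹ + 1)⁻¹ := by
              rw [← hfac]
          _ = ga * gb := pi_eg hEmem hGmem
      · -- idempotent
        funext a
        show rho (1 : B) (rho (1 : B) a) = rho (1 : B) a
        rw [rho_one_apply a, rho_one_apply]
        exact pi_of_G (pi_mem_G a)
      · -- range = G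
        ext x
        constructor
        · rintro ⟨a, rfl⟩
          rw [rho_one_apply]
          exact pi_mem_G a
        · intro hx
          exact ⟨x, by rw [rho_one_apply]; exact pi_of_G hx⟩
      · -- kernel = E
        ext b
        simp only [Set.mem_setOf_eq, rho_one_apply]
        constructor
        · intro h
          have h1 : b⁻¹ + 1 = 1 := by
            have := congrArg (·⁻¹) h
            simpa using this
          have hb : b⁻¹ ∈ E B := (mem_E_iff _).2 h1
          have := hinvE _ hb
          rwa [inv_inv] at this
        · intro hb
          have h1 : b⁻¹ + 1 = 1 := (mem_E_iff _).1 (hinvE _ hb)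
          rw [h1, inv_one]
    · -- backward: existence of φ ⟹ E ideal
      rintro ⟨φ, hhom, hidem, hrange, hker⟩
      have hker' : ∀ b : B, φ b = 1 ↔ b ∈ E B := fun b => by
        rw [← hker]; rfl
      have hφ1 : φ 1 = 1 := by
        have h := hhom 1 1
        rw [one_mul] at h
        exact left_eq_mul.mp h
      have hφinv : ∀ x : B, φ x⁻¹ = (φ x)⁻¹ := by
        intro x
        have h := hhom x x⁻¹
        rw [mul_inv_cancel, hφ1] at h
        exact (inv_eq_of_mul_eq_one_right h.symm).symm
      have h1E : (1 : B) ∈ E B := (mem_E_iff 1).2 (one_add 1)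
      have h1EG : (1 : B) ∈ E B ∩ G B := ⟨h1E, one_mem_G⟩
      have hEG : ∀ x ∈ E B ∩ G B, x = 1 := fun x hx =>
        eq_one_of_mem_E_G hx.1 hx.2
      refine ⟨?_, ⟨⟨h1E, ?_, ?_⟩, ?_⟩, ⟨⟨?_, h1EG, ?_, ?_⟩, ?_⟩, ?_, ?_⟩
      · -- additive subsemigroup
        intro x hx y hy
        refine (mem_E_iff _).2 ?_
        rw [aassoc, (mem_E_iff y).1 hy, (mem_E_iff x).1 hx]
      · -- mult closure
        intro x hx y hy
        refine (hker' _).1 ?_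
        rw [hhom, (hker' x).2 hx, (hker' y).2 hy, one_mul]
      · -- inverse closure
        intro x hx
        refine (hker' _).1 ?_
        rw [hφinv, (hker' x).2 hx, inv_one]
      · -- normality
        intro x hx b
        refine (hker' _).1 ?_
        rw [hhom, hhom, (hker' x).2 hx, mul_one, hφinv, mul_inv_cancel]
      · -- E ∩ G ⊆ G
        exact fun x hx => hx.2
      · -- add closure of E ∩ G
        intro x hx y hy
        rw [hEG x hx, hEG y hy, one_add]
        exact h1EG
      · -- neg closure of E ∩ G
        intro x hx
        rw [hEG x hx]
        show (1 : B) * (1⁻¹ + 1⁻¹) ∈ E B ∩ G B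
        rw [inv_one, one_add, one_mul]
        exact h1EG
      · -- additive normality in G
        intro g hg x hx
        rw [hEG x hx, G_add_one hg]
        show g + g * (g⁻¹ + g⁻¹) ∈ E B ∩ G B
        rw [add_negSelf]
        exact h1EG
      · -- rho condition
        intro b n hn
        rw [hEG n hn]
        show ((1 : B)⁻¹ + b)⁻¹ * b ∈ E B
        rw [inv_one, one_add, inv_mul_cancel]
        exact h1E
      · -- lambda condition
        intro g _ e he
        exact lam_mem_E g he.1
  · -- uniqueness: any such φ equals ρ_1
    intro φ hhom hidem hrange hker
    funext a
    have hker' : φ (lam a 1) = 1 := by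
      have : lam a 1 ∈ {b : B | φ b = 1} := by rw [hker]; exact lam_one_mem_E a
      exact this
    have hg : (a⁻¹ + 1)⁻¹ ∈ Set.range φ := by rw [hrange]; exact pi_mem_G a
    obtain ⟨c, hc⟩ := hg
    have hfix : φ ((a⁻¹ + 1)⁻¹) = (a⁻¹ + 1)⁻¹ := by
      rw [← hc]
      calc φ (φ c) = (φ ∘ φ) c := rfl
        _ = φ c := by rw [hidem]
    calc φ a = φ (lam a 1 * (a⁻¹ + 1)⁻¹) := by rw [← factorization]
      _ = φ (lam a 1) * φ ((a⁻¹ + 1)⁻¹) := hhom _ _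
      _ = (a⁻¹ + 1)⁻¹ := by rw [hker', hfix, one_mul]
      _ = rho (1 : B) a := (rho_one_apply a).symm

end LeftSemiBrace
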